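/- Let (a_n) be a positive sequence converging to zero and (b_n) a bounded positive sequence such that Σ a_n b_n = +∞. Then there exists a sequence (c_n) with c_n ∈ {0, b_n} for every n, such that Σ a_n c_n = +∞ and Σ a_n² c_n < +∞. -/
import Mathlib

noncomputable def Saux (a b : ℕ → ℝ) : ℕ → ℝ
  | 0 => 0
  | n + 1 => Saux a b n +
      a n * (if a n * (1 + Saux a b n) ^ 2 ≤ 1 then b n else 0)

lemma step_ineq (x y P M : ℝ) (hx : 0 < x) (hy : 0 < y) (hyM : y ≤ M)
    (hP : 1 ≤ P) (h : x * P ^ 2 ≤ 1) :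
    x ^ 2 * y ≤ (1 + M) * (1 / P - 1 / (P + x * y)) := by
  have hP0 : 0 < P := lt_of_lt_of_le one_pos hP
  have hQ0 : 0 < P + x * y := by positivity
  have hM0 : 0 < M := lt_of_lt_of_le hy hyM
  rw [div_sub_div _ _ (ne_of_gt hP0) (ne_of_gt hQ0),
    show 1 * (P + x * y) - P * 1 = x * y from by ring, mul_div_assoc',
    le_div_iff₀ (by positivity)]
  have hPP : 1 ≤ P ^ 2 := by nlinarith
  have hx1 : x ≤ 1 := by nlinarith [mul_le_mul_of_nonneg_left hPP hx.le]
  have h1 : x * y ≤ M * P := by nlinarith [mul_le_mul_of_nonneg_right hx1 hy.le]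
  have h2 : P + x * y ≤ (1 + M) * P := by nlinarith
  have h3 : x * (P * (P + x * y)) ≤ 1 + M := by nlinarith
  nlinarith [mul_le_mul_of_nonneg_left h3 (mul_pos hx hy).le]

/-- Let `(a n)` be a positive sequence tending to `0` and `(b n)` a bounded positive
sequence with `Σ a n * b n = +∞`. Then there is `(c n)` with `c n ∈ {0, b n}` such that
`Σ a n * c n = +∞` and `Σ (a n)^2 * c n < +∞`. -/
theorem stmt2 (a b : ℕ → ℝ) (ha : ∀ n, 0 < a n) (hb : ∀ n, 0 < b n)
    (ha0 : Filter.Tendsto a Filter.atTop (nhds 0)) (hbdd : ∃ M : ℝ, ∀ n, b n ≤ M)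
    (hdiv : ¬ Summable (fun n => a n * b n)) :
    ∃ c : ℕ → ℝ, (∀ n, c n = b n ∨ c n = 0) ∧
      (¬ Summable (fun n => a n * c n)) ∧ Summable (fun n => (a n) ^ 2 * c n) := by
  obtain ⟨M, hM⟩ := hbdd
  have hM0 : 0 < M := lt_of_lt_of_le (hb 0) (hM 0)
  set S := Saux a b with hS
  set c : ℕ → ℝ := fun n => if a n * (1 + S n) ^ 2 ≤ 1 then b n else 0 with hc
  have hSsucc : ∀ n, S (n + 1) = S n + a n * c n := fun n => rfl
  have hc01 : ∀ n, c n = b n ∨ c n = 0 := by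
    intro n
    by_cases h : a n * (1 + S n) ^ 2 ≤ 1 <;> simp [hc, h]
  have hcnonneg : ∀ n, 0 ≤ c n := by
    intro n
    rcases hc01 n with h | h <;> rw [h]
    exact (hb n).le
  have hcle : ∀ n, c n ≤ b n := by
    intro n
    rcases hc01 n with h | h
    · rw [h]
    · rw [h]; exact (hb n).le
  have hSnonneg : ∀ n, 0 ≤ S n := by
    intro n
    induction n with
    | zero => exact le_rfl
    | succ k ih =>
      rw [hSsucc]
      have := mul_nonneg (ha k).le (hcnonneg k)
      linarith
  have hSsum : ∀ n, S n = ∑ i ∈ Finset.range n, a i * c i := by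
    intro n
    induction n with
    | zero => rfl
    | succ k ih => rw [hSsucc, Finset.sum_range_succ, ih]
  refine ⟨c, hc01, ?_, ?_⟩
  · -- not summable
    intro hsum
    have hLbound : ∀ n, S n ≤ ∑' k, a k * c k := by
      intro n
      rw [hSsum]
      exact Summable.sum_le_tsum _ (fun i _ => mul_nonneg (ha i).le (hcnonneg i)) hsum
    set L := ∑' k, a k * c k with hL
    have hL0 : (0:ℝ) < 1 + L := lt_of_lt_of_le one_pos (by
      have := hLbound 0
      simp only [hS, Saux] at this
      linarith)
    -- eventually a n ≤ 1/(1+L)^2, hence c n = b n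
    have hev : ∀ᶠ n in Filter.atTop, a n < 1 / (1 + L) ^ 2 := by
      have hpos : (0:ℝ) < 1 / (1 + L) ^ 2 := by positivity
      exact ha0.eventually (gt_mem_nhds hpos)
    obtain ⟨N, hN⟩ := hev.exists_forall_of_atTop
    have heq : ∀ n, a (n + N) * c (n + N) = a (n + N) * b (n + N) := by
      intro n
      have h1 : a (n + N) * (1 + S (n + N)) ^ 2 ≤ 1 := by
        have h2 : a (n + N) < 1 / (1 + L) ^ 2 := hN (n + N) (Nat.le_add_left N n)
        have h3 : (1 + S (n + N)) ^ 2 ≤ (1 + L) ^ 2 := by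
          have := hLbound (n + N)
          nlinarith [hSnonneg (n + N)]
        have h4 : (0:ℝ) < (1 + L) ^ 2 := by positivity
        calc a (n + N) * (1 + S (n + N)) ^ 2 ≤ a (n + N) * (1 + L) ^ 2 :=
              mul_le_mul_of_nonneg_left h3 (ha _).le
          _ ≤ (1 / (1 + L) ^ 2) * (1 + L) ^ 2 := by nlinarith
          _ = 1 := by field_simp
      simp [hc, h1]
    have hsum2 : Summable (fun n => a (n + N) * c (n + N)) :=
      (summable_nat_add_iff N).2 hsum
    have hsum3 : Summable (fun n => a (n + N) * b (n + N)) := hsum2.congr heq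
    exact hdiv ((summable_nat_add_iff N).1 hsum3)
  · -- summable
    have key : ∀ n, ∑ i ∈ Finset.range n, (a i) ^ 2 * c i ≤
        (1 + M) * (1 - 1 / (1 + S n)) := by
      intro n
      induction n with
      | zero => norm_num [hS, Saux]
      | succ k ih =>
        rw [Finset.sum_range_succ]
        have step : (a k) ^ 2 * c k ≤
            (1 + M) * (1 / (1 + S k) - 1 / (1 + S (k + 1))) := by
          by_cases h : a k * (1 + S k) ^ 2 ≤ 1
          · have hck : c k = b k := by simp [hc, h]
            have hQ : S (k + 1) = S k + a k * b k := by rw [hSsucc, hck]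
            have e2 : 1 + S (k + 1) = (1 + S k) + a k * b k := by rw [hQ]; ring
            rw [hck, e2]
            exact step_ineq (a k) (b k) (1 + S k) M (ha k) (hb k) (hM k)
              (by linarith [hSnonneg k]) h
          · have hck : c k = 0 := by simp [hc, h]
            have hSk : S (k + 1) = S k := by rw [hSsucc, hck]; ring
            rw [hck, hSk]; simp
        linarith
    have bound : ∀ n, ∑ i ∈ Finset.range n, (a i) ^ 2 * c i ≤ 1 + M := by
      intro n
      have hP : (0:ℝ) < 1 + S n := lt_of_lt_of_le one_pos (by linarith [hSnonneg n])
      have h1 : 1 / (1 + S n) ≥ 0 := by positivity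
      have := key n
      nlinarith
    exact summable_of_sum_range_le
      (fun i => mul_nonneg (sq_nonneg _) (hcnonneg i)) bound
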